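/- arXiv:1604.05787 — 4 statements merged into one kernel-verified Lean document; each statement's English description precedes it below -/
import Mathlib

section
/- Let g : ℝ^d → ℂ be a function such that for some fixed coordinate index j the first and second partial derivatives ∂g/∂t_j and ∂²g/∂t_j² exist everywhere. Assume |g(t)| ≤ a·‖t‖^{-p} and |∂²g/∂t_j²(t)| ≤ b for some constants a, b > 0, p ≥ 0, and all t ≠ 0. Then |∂g/∂t_j(t)| ≤ 2√(ab)·‖t‖^{-p/2} for all t ≠ 0. -/
/-!
Restrict `g` to the ray from `t` in the direction `±e_j` pointing away from the origin, so that
`‖·‖ ≥ ‖t‖` along it and hence `|g| ≤ A := a‖t‖^(-p)` there. For a function `φ` on a half-line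
with `|φ| ≤ A` and `|φ''| ≤ b`, Taylor's formula to second order gives
`H |φ'(0)| ≤ 2A + b H² / 2` for every `H ≥ 0`, and `H = 2√(A/b)` yields `|φ'(0)| ≤ 2√(Ab)`.
-/

open Set

section HalfLine

variable {F : Type*} [NormedAddCommGroup F] [NormedSpace ℝ F] {φ φ1 φ2 : ℝ → F} {A b H : ℝ}

theorem norm_sub_sub_smul_le_of_norm_deriv2_le (hH : 0 ≤ H)
    (h1 : ∀ u, HasDerivAt φ (φ1 u) u) (h2 : ∀ u, HasDerivAt φ1 (φ2 u) u)
    (hb : ∀ u ∈ Icc 0 H, ‖φ2 u‖ ≤ b) :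
    ‖φ H - φ 0 - H • φ1 0‖ ≤ b / 2 * H ^ 2 := by
  have hφ1_lip : ∀ u ∈ Icc 0 H, ‖φ1 u - φ1 0‖ ≤ b * (u - 0) :=
    norm_image_sub_le_of_norm_deriv_le_segment'
      (fun u _ => (h2 u).hasDerivWithinAt) (fun u hu => hb u (Ico_subset_Icc_self hu))
  have hrem : ∀ u, HasDerivAt (fun s : ℝ => φ s - φ 0 - s • φ1 0) (φ1 u - φ1 0) u := fun u =>
    (((h1 u).sub_const (φ 0)).sub ((hasDerivAt_id u).smul_const (φ1 0))).congr_deriv (by simp)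
  have hquad : ∀ u, HasDerivAt (fun s : ℝ => b / 2 * s ^ 2) (b * u) u := fun u =>
    ((hasDerivAt_pow 2 u).const_mul (b / 2)).congr_deriv (by norm_num; ring)
  simpa using image_norm_le_of_norm_deriv_right_le_deriv_boundary
    (fun u _ => (hrem u).continuousAt.continuousWithinAt)
    (fun u _ => (hrem u).hasDerivWithinAt) (by simp) hquad
    (fun u hu => by simpa using hφ1_lip u (Ico_subset_Icc_self hu)) (right_mem_Icc.2 hH)

theorem mul_norm_deriv_le_of_norm_le_of_norm_deriv2_le (hH : 0 ≤ H)
    (h1 : ∀ u, HasDerivAt φ (φ1 u) u) (h2 : ∀ u, HasDerivAt φ1 (φ2 u) u)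
    (hA : ∀ u ∈ Icc 0 H, ‖φ u‖ ≤ A) (hb : ∀ u ∈ Icc 0 H, ‖φ2 u‖ ≤ b) :
    H * ‖φ1 0‖ ≤ 2 * A + b / 2 * H ^ 2 := by
  have htaylor := norm_sub_sub_smul_le_of_norm_deriv2_le hH h1 h2 hb
  have hφH := hA H (right_mem_Icc.2 hH)
  have hφ0 := hA 0 (left_mem_Icc.2 hH)
  calc H * ‖φ1 0‖ = ‖φ H - φ 0 - (φ H - φ 0 - H • φ1 0)‖ := by
        rw [sub_sub_cancel, norm_smul, Real.norm_of_nonneg hH]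
    _ ≤ ‖φ H‖ + ‖φ 0‖ + ‖φ H - φ 0 - H • φ1 0‖ :=
        (norm_sub_le _ _).trans (add_le_add_left (norm_sub_le _ _) _)
    _ ≤ 2 * A + b / 2 * H ^ 2 := by linarith

theorem norm_deriv_le_two_sqrt_of_norm_le_Ici (hA0 : 0 < A) (hb0 : 0 < b)
    (h1 : ∀ u, HasDerivAt φ (φ1 u) u) (h2 : ∀ u, HasDerivAt φ1 (φ2 u) u)
    (hA : ∀ u, 0 ≤ u → ‖φ u‖ ≤ A) (hb : ∀ u, 0 ≤ u → ‖φ2 u‖ ≤ b) :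
    ‖φ1 0‖ ≤ 2 * √(A * b) := by
  -- `H` minimises `(2 * A + b / 2 * H ^ 2) / H`
  set H := 2 * √A / √b
  have hH : 0 < H := by positivity
  have hmain := mul_norm_deriv_le_of_norm_le_of_norm_deriv2_le hH.le h1 h2
    (fun u hu => hA u hu.1) (fun u hu => hb u hu.1)
  have hopt : 2 * A + b / 2 * H ^ 2 = H * (2 * √(A * b)) := by
    have hHb : H * √b = 2 * √A := div_mul_cancel₀ _ (by positivity)
    rw [Real.sqrt_mul hA0.le]
    linear_combination (-H ^ 2 / 2) * Real.sq_sqrt hb0.le + ((H * √b - 2 * √A) / 2) * hHb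
      - 2 * Real.sq_sqrt hA0.le
  exact le_of_mul_le_mul_left (hmain.trans hopt.le) hH

theorem norm_deriv_le_two_sqrt_of_norm_le_Iic (hA0 : 0 < A) (hb0 : 0 < b)
    (h1 : ∀ u, HasDerivAt φ (φ1 u) u) (h2 : ∀ u, HasDerivAt φ1 (φ2 u) u)
    (hA : ∀ u, u ≤ 0 → ‖φ u‖ ≤ A) (hb : ∀ u, u ≤ 0 → ‖φ2 u‖ ≤ b) :
    ‖φ1 0‖ ≤ 2 * √(A * b) := by
  have h1' : ∀ u, HasDerivAt (fun s => φ (-s)) (-φ1 (-u)) u := fun u =>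
    ((h1 (-u)).scomp u (hasDerivAt_neg u)).congr_deriv (by simp)
  have h2' : ∀ u, HasDerivAt (fun s => -φ1 (-s)) (φ2 (-u)) u := fun u =>
    ((h2 (-u)).scomp u (hasDerivAt_neg u)).neg.congr_deriv (by simp)
  simpa using norm_deriv_le_two_sqrt_of_norm_le_Ici hA0 hb0 h1' h2'
    (fun u hu => hA (-u) (by linarith)) (fun u hu => hb (-u) (by linarith))

end HalfLine

theorem HasLineDerivAt.hasDerivAt_add_smul {𝕜 E F : Type*} [NontriviallyNormedField 𝕜]
    [NormedAddCommGroup E] [NormedSpace 𝕜 E] [NormedAddCommGroup F] [NormedSpace 𝕜 F]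
    {f : E → F} {f' : F} {x v : E} {u : 𝕜} (h : HasLineDerivAt 𝕜 f f' (x + u • v) v) :
    HasDerivAt (fun s => f (x + s • v)) f' u := by
  have h' : HasDerivAt (fun s => f (x + u • v + s • v)) f' (u - u) := by rwa [sub_self]
  convert h'.comp_sub_const u u using 1
  ext s
  congr 1
  module

theorem norm_le_norm_add_smul_of_inner_nonneg {E : Type*} [NormedAddCommGroup E]
    [InnerProductSpace ℝ E] {x v : E} {s : ℝ} (h : 0 ≤ s * inner ℝ x v) : ‖x‖ ≤ ‖x + s • v‖ := by
  rw [← sq_le_sq₀ (norm_nonneg _) (norm_nonneg _), norm_add_sq_real, real_inner_smul_right]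
  nlinarith [sq_nonneg ‖s • v‖]

/-- Calculus lemma (Fill–Janson style): if `g : ℝ^d → ℂ` has first and second partial
derivatives in the `j`-th coordinate direction everywhere, `|g(t)| ≤ a‖t‖^(-p)` and
`|∂²g/∂t_j²(t)| ≤ b` for all `t ≠ 0`, then `|∂g/∂t_j(t)| ≤ 2√(ab)‖t‖^(-p/2)` for `t ≠ 0`. -/
theorem partial_deriv_bound_of_decay
    {d : ℕ} (g g1 g2 : EuclideanSpace ℝ (Fin d) → ℂ) (j : Fin d)
    (hg1 : ∀ t, HasLineDerivAt ℝ g (g1 t) t (EuclideanSpace.single j 1))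
    (hg2 : ∀ t, HasLineDerivAt ℝ g1 (g2 t) t (EuclideanSpace.single j 1))
    (a b : ℝ) (ha : 0 < a) (hb : 0 < b) (p : ℝ) (hp : 0 ≤ p)
    (hgbd : ∀ t, t ≠ 0 → ‖g t‖ ≤ a * ‖t‖ ^ (-p))
    (hg2bd : ∀ t, t ≠ 0 → ‖g2 t‖ ≤ b) :
    ∀ t, t ≠ 0 → ‖g1 t‖ ≤ 2 * Real.sqrt (a * b) * ‖t‖ ^ (-p / 2) := by
  intro t ht
  set e := EuclideanSpace.single j (1 : ℝ)
  have hA : 0 < a * ‖t‖ ^ (-p) := by positivity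
  have hφ1 (u : ℝ) : HasDerivAt (fun s => g (t + s • e)) (g1 (t + u • e)) u :=
    (hg1 _).hasDerivAt_add_smul
  have hφ2 (u : ℝ) : HasDerivAt (fun s => g1 (t + s • e)) (g2 (t + u • e)) u :=
    (hg2 _).hasDerivAt_add_smul
  have hray (u : ℝ) (hu : 0 ≤ u * t j) :
      ‖g (t + u • e)‖ ≤ a * ‖t‖ ^ (-p) ∧ ‖g2 (t + u • e)‖ ≤ b := by
    have hnorm : ‖t‖ ≤ ‖t + u • e‖ := norm_le_norm_add_smul_of_inner_nonneg <| by
      simpa [e, EuclideanSpace.inner_single_right] using hu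
    have hne : t + u • e ≠ 0 := norm_pos_iff.1 ((norm_pos_iff.2 ht).trans_le hnorm)
    refine ⟨(hgbd _ hne).trans (mul_le_mul_of_nonneg_left ?_ ha.le), hg2bd _ hne⟩
    exact Real.rpow_le_rpow_of_nonpos (norm_pos_iff.2 ht) hnorm (neg_nonpos.2 hp)
  have hbound : ‖g1 t‖ ≤ 2 * √(a * ‖t‖ ^ (-p) * b) := by
    rcases le_total 0 (t j) with htj | htj
    · simpa using norm_deriv_le_two_sqrt_of_norm_le_Ici hA hb hφ1 hφ2
        (fun u hu => (hray u (mul_nonneg hu htj)).1) (fun u hu => (hray u (mul_nonneg hu htj)).2)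
    · simpa using norm_deriv_le_two_sqrt_of_norm_le_Iic hA hb hφ1 hφ2
        (fun u hu => (hray u (mul_nonneg_of_nonpos_of_nonpos hu htj)).1)
        (fun u hu => (hray u (mul_nonneg_of_nonpos_of_nonpos hu htj)).2)
  rwa [mul_right_comm, Real.sqrt_mul (by positivity), Real.sqrt_eq_rpow (‖t‖ ^ (-p)),
    ← Real.rpow_mul (norm_nonneg t), ← mul_assoc, ← div_eq_mul_one_div] at hbound
end

section
/- Let X be an ℝ^d-valued random variable whose support is in general position, i.e., there exist x_0, …, x_d in the support of X such that x_1 − x_0, …, x_d − x_0 are linearly independent. Then there exists ε > 0 such that the characteristic function φ of X satisfies |φ(t)| < 1 for all t with 0 < ‖t‖ ≤ ε. -/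
/-!
If `|φ(t)| = 1`, equality in `|E e^{i⟨t,X⟩}| ≤ 1` forces `e^{i⟨t,X⟩}` to be a.s. constant,
hence (by continuity) constant on the support. For the points `x_0, …, x_d` this makes each
`⟨t, x_j − x_0⟩` a multiple of `2π`; for `t` small these multiples must vanish, and since the
`x_j − x_0` span `ℝ^d`, `t = 0`.
-/

open MeasureTheory
open scoped RealInnerProductSpace

/-- `x` belongs to the support of (the distribution of) `X`. -/
def MemSupp {Ω : Type*} [MeasurableSpace Ω] (μ : Measure Ω) {d : ℕ}
    (X : Ω → EuclideanSpace ℝ (Fin d)) (x : EuclideanSpace ℝ (Fin d)) : Prop :=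
  ∀ ε : ℝ, 0 < ε → 0 < μ {ω | ‖X ω - x‖ < ε}

lemma Complex.eq_of_exp_ofReal_mul_I_eq {a b : ℝ}
    (h : Complex.exp (a * Complex.I) = Complex.exp (b * Complex.I))
    (hab : |a - b| < 2 * Real.pi) : a = b := by
  obtain ⟨hlo, hhi⟩ := abs_lt.1 hab
  rw [← sub_eq_zero, ← Real.cos_eq_one_iff_of_lt_of_lt (by linarith) hhi,
    ← Complex.exp_ofReal_mul_I_re, Complex.ofReal_sub, sub_mul, Complex.exp_sub, h,
    div_self (Complex.exp_ne_zero _), Complex.one_re]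

section InnerProductSpace

variable {E : Type*} [NormedAddCommGroup E] [InnerProductSpace ℝ E]

lemma exists_pos_forall_norm_le_abs_inner_lt {ι : Type*} [Finite ι] (v : ι → E) {r : ℝ}
    (hr : 0 < r) : ∃ ε > 0, ∀ t : E, ‖t‖ ≤ ε → ∀ i, |⟪t, v i⟫| < r := by
  have hsmall : ∀ᶠ t in nhds (0 : E), ∀ i, |⟪t, v i⟫| < r :=
    Filter.eventually_all.2 fun i =>
      (show Continuous fun t : E => |⟪t, v i⟫| by fun_prop).continuousAt.eventually_lt
        continuousAt_const (by simpa using hr)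
  obtain ⟨δ, hδ, hball⟩ := Metric.eventually_nhds_iff.1 hsmall
  exact ⟨δ / 2, half_pos hδ, fun t ht => hball (by rw [dist_zero_right]; linarith)⟩

lemma eq_zero_of_forall_inner_eq_zero_of_linearIndependent [FiniteDimensional ℝ E]
    {ι : Type*} [Fintype ι] {v : ι → E} (hv : LinearIndependent ℝ v)
    (hcard : Fintype.card ι = Module.finrank ℝ E) {t : E} (ht : ∀ i, ⟪t, v i⟫ = 0) :
    t = 0 := by
  have hinner : innerₛₗ ℝ t = 0 :=
    LinearMap.ext_on_range (hv.span_eq_top_of_card_eq_finrank' hcard) fun i => by simpa using ht i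
  simpa using congr($hinner t)

end InnerProductSpace

lemma MemSupp.eq_of_ae_eq_const {Ω : Type*} [MeasurableSpace Ω] {μ : Measure Ω} {d : ℕ}
    {X : Ω → EuclideanSpace ℝ (Fin d)} {y : EuclideanSpace ℝ (Fin d)} (hy : MemSupp μ X y)
    {β : Type*} [TopologicalSpace β] [T1Space β] {g : EuclideanSpace ℝ (Fin d) → β}
    (hg : Continuous g) {c : β} (hconst : ∀ᵐ ω ∂μ, g (X ω) = c) : g y = c := by
  by_contra hne
  obtain ⟨δ, hδ, hball⟩ :=
    Metric.isOpen_iff.1 (isOpen_compl_singleton.preimage hg) y hne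
  refine (hy δ hδ).ne' (measure_mono_null (fun ω hω => ?_) (ae_iff.1 hconst))
  exact hball (by rwa [Metric.mem_ball, dist_eq_norm])

theorem charFun_lt_one_near_zero_of_general_position_general
    {Ω : Type*} [MeasurableSpace Ω] (μ : Measure Ω) [IsProbabilityMeasure μ]
    {d : ℕ} (X : Ω → EuclideanSpace ℝ (Fin d))
    (hgp : ∃ x : Fin (d + 1) → EuclideanSpace ℝ (Fin d),
      (∀ i, MemSupp μ X (x i)) ∧
      LinearIndependent ℝ (fun i : Fin d => x i.succ - x 0)) :
    ∃ ε : ℝ, 0 < ε ∧ ∀ t : EuclideanSpace ℝ (Fin d), 0 < ‖t‖ → ‖t‖ ≤ ε →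
      ‖∫ ω, Complex.exp ((⟪t, X ω⟫ : ℝ) * Complex.I) ∂μ‖ < 1 := by
  obtain ⟨x, hsupp, hli⟩ := hgp
  obtain ⟨ε, hε, hsmall⟩ :=
    exists_pos_forall_norm_le_abs_inner_lt (fun j : Fin d => x j.succ - x 0) Real.two_pi_pos
  refine ⟨ε, hε, fun t ht htε => ?_⟩
  by_contra! hφ
  have hbound : ∀ᵐ ω ∂μ, ‖Complex.exp ((⟪t, X ω⟫ : ℝ) * Complex.I)‖ ≤ 1 :=
    Filter.Eventually.of_forall fun ω => (Complex.norm_exp_ofReal_mul_I _).le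
  have hconst := (ae_eq_const_or_norm_integral_lt_of_norm_le_const hbound).resolve_right
    (by simpa using hφ)
  have hsupp_const : ∀ i, Complex.exp ((⟪t, x i⟫ : ℝ) * Complex.I) =
      ⨍ ω, Complex.exp ((⟪t, X ω⟫ : ℝ) * Complex.I) ∂μ :=
    fun i => (hsupp i).eq_of_ae_eq_const
      (g := fun z => Complex.exp ((⟪t, z⟫ : ℝ) * Complex.I)) (by fun_prop) hconst
  have horth : ∀ j : Fin d, ⟪t, x j.succ - x 0⟫ = 0 := fun j => by
    rw [inner_sub_right, sub_eq_zero]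
    refine Complex.eq_of_exp_ofReal_mul_I_eq ((hsupp_const _).trans (hsupp_const 0).symm) ?_
    simpa only [inner_sub_right] using hsmall t htε j
  exact ht.ne' (norm_eq_zero.2
    (eq_zero_of_forall_inner_eq_zero_of_linearIndependent hli (by simp) horth))

/-- If the support of an `ℝ^d`-valued random variable `X` is in general position
(it contains points `x_0, …, x_d` with `x_1 − x_0, …, x_d − x_0` linearly independent),
then there is `ε > 0` such that the characteristic function `φ` of `X` satisfies
`|φ(t)| < 1` for all `t` with `0 < ‖t‖ ≤ ε`. -/
theorem charFun_lt_one_near_zero_of_general_position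
    {Ω : Type*} [MeasurableSpace Ω] (μ : Measure Ω) [IsProbabilityMeasure μ]
    {d : ℕ} (X : Ω → EuclideanSpace ℝ (Fin d)) (hX : Measurable X)
    (hgp : ∃ x : Fin (d + 1) → EuclideanSpace ℝ (Fin d),
      (∀ i, MemSupp μ X (x i)) ∧
      LinearIndependent ℝ (fun i : Fin d => x i.succ - x 0)) :
    ∃ ε : ℝ, 0 < ε ∧ ∀ t : EuclideanSpace ℝ (Fin d), 0 < ‖t‖ → ‖t‖ ≤ ε →
      ‖∫ ω, Complex.exp ((⟪t, X ω⟫ : ℝ) * Complex.I) ∂μ‖ < 1 :=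
  charFun_lt_one_near_zero_of_general_position_general μ X hgp
end

section
/- Suppose X is an ℝ^d-valued random variable with characteristic function φ, and suppose X satisfies the distributional equation X =_d Σ_{j=1}^∞ A_j X^{(j)} + b, where X^{(1)}, X^{(2)}, … and ((A_j)_{j≥1}, b) are independent, each X^{(j)} is distributed as some random vector with characteristic function φ_j, the A_j are random d×d matrices, b is a random vector in ℝ^d, and the series converges almost surely. Then |φ(t)| ≤ E[∏_{j=1}^∞ |φ_j(A_j^T t)|] for all t ∈ ℝ^d. -/
/-! Truncate the series after `n` terms. Conditionally on the coefficients `((A_j)_j, b)`, the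
truncated sum is a constant plus a sum of independent vectors `A_j X^{(j)}`, so its
characteristic function at `t` is `e^{i⟨t, b⟩} ∏_{j<n} φ_j(A_jᵀ t)`; averaging over the
coefficients bounds its modulus by `E ∏_{j<n} |φ_j(A_jᵀ t)|`. As `n → ∞` the characteristic
function tends to `φ(t)` by almost sure convergence and dominated convergence, and the bound to
`E ∏_j |φ_j(A_jᵀ t)|`, because partial products of factors in `[0, 1]` decrease to the
infinite product. -/

open MeasureTheory ProbabilityTheory Matrix
open scoped RealInnerProductSpace

/-- View a plain vector as an element of Euclidean space. -/
noncomputable def toEuc {d : ℕ} (v : Fin d → ℝ) : EuclideanSpace ℝ (Fin d) :=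
  (WithLp.equiv 2 (Fin d → ℝ)).symm v

/-- View an element of Euclidean space as a plain vector. -/
noncomputable def ofEuc {d : ℕ} (v : EuclideanSpace ℝ (Fin d)) : Fin d → ℝ :=
  WithLp.equiv 2 (Fin d → ℝ) v

open Filter
open scoped Topology

lemma tendsto_prod_range_tprod_of_nonneg_of_le_one {f : ℕ → ℝ} (h0 : ∀ j, 0 ≤ f j)
    (h1 : ∀ j, f j ≤ 1) :
    Tendsto (fun n => ∏ j ∈ Finset.range n, f j) atTop (𝓝 (∏' j, f j)) := by
  have hf : HasProd f (⨅ s : Finset ℕ, ∏ j ∈ s, f j) :=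
    tendsto_atTop_ciInf (Finset.prod_anti_set_of_le_one h0 h1)
      ⟨0, Set.forall_mem_range.2 fun s => Finset.prod_nonneg fun j _ => h0 j⟩
  rw [hf.tprod_eq]
  exact hf.tendsto_prod_nat

section Integral

variable {Ω : Type*} [MeasurableSpace Ω] {μ : Measure Ω}

lemma tendsto_integral_prod_range_tprod_of_nonneg_of_le_one [IsFiniteMeasure μ]
    {f : ℕ → Ω → ℝ} (hf : ∀ j, AEStronglyMeasurable (f j) μ) (h0 : ∀ j ω, 0 ≤ f j ω)
    (h1 : ∀ j ω, f j ω ≤ 1) :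
    Tendsto (fun n => ∫ ω, ∏ j ∈ Finset.range n, f j ω ∂μ) atTop
      (𝓝 (∫ ω, ∏' j, f j ω ∂μ)) := by
  refine tendsto_integral_of_dominated_convergence (fun _ => 1)
    (fun n => Finset.aestronglyMeasurable_fun_prod _ fun j _ => hf j) (integrable_const 1)
    (fun n => ae_of_all _ fun ω => ?_)
    (ae_of_all _ fun ω => tendsto_prod_range_tprod_of_nonneg_of_le_one (h0 · ω) (h1 · ω))
  rw [Real.norm_of_nonneg (Finset.prod_nonneg fun j _ => h0 j ω)]
  exact Finset.prod_le_one (fun j _ => h0 j ω) fun j _ => h1 j ω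

lemma ProbabilityTheory.IndepFun.integral_comp_eq_integral_integral
    {α β E : Type*} [MeasurableSpace α] [MeasurableSpace β] [NormedAddCommGroup E]
    [NormedSpace ℝ E] [IsFiniteMeasure μ] {W : Ω → α} {Z : Ω → β} (hWZ : IndepFun W Z μ)
    (hW : Measurable W) (hZ : Measurable Z) {F : α × β → E} (hF : StronglyMeasurable F)
    (hFi : Integrable (fun ω => F (W ω, Z ω)) μ) :
    ∫ ω, F (W ω, Z ω) ∂μ = ∫ ω, ∫ ω', F (W ω, Z ω') ∂μ ∂μ := by
  have hlaw := hWZ.map_prod_eq_prod_map_map hW.aemeasurable hZ.aemeasurable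
  have hFi' : Integrable F ((μ.map W).prod (μ.map Z)) := by
    rw [← hlaw]
    exact (integrable_map_measure hF.aestronglyMeasurable (hW.prodMk hZ).aemeasurable).2 hFi
  calc ∫ ω, F (W ω, Z ω) ∂μ = ∫ p, F p ∂((μ.map W).prod (μ.map Z)) := by
        rw [← hlaw, integral_map (hW.prodMk hZ).aemeasurable hF.aestronglyMeasurable]
    _ = ∫ a, ∫ z, F (a, z) ∂(μ.map Z) ∂(μ.map W) := integral_prod F hFi'
    _ = ∫ ω, ∫ ω', F (W ω, Z ω') ∂μ ∂μ := by
        rw [integral_map hW.aemeasurable hF.integral_prod_right'.aestronglyMeasurable]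
        congr with ω
        exact integral_map hZ.aemeasurable
          (hF.comp_measurable measurable_prodMk_left).aestronglyMeasurable

variable {E : Type*} [NormedAddCommGroup E] [InnerProductSpace ℝ E] [MeasurableSpace E]

lemma integral_exp_inner_eq_charFun_map [OpensMeasurableSpace E] {V : Ω → E}
    (hV : AEMeasurable V μ) (t : E) :
    ∫ ω, Complex.exp ((⟪t, V ω⟫ : ℝ) * Complex.I) ∂μ = charFun (μ.map V) t := by
  rw [charFun_apply, integral_map hV (by fun_prop)]
  simp_rw [real_inner_comm]

lemma tendsto_charFun_map_of_ae_tendsto [BorelSpace E] [IsFiniteMeasure μ]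
    {Y : ℕ → Ω → E} {Y' : Ω → E} (hY : ∀ n, AEMeasurable (Y n) μ)
    (hlim : ∀ᵐ ω ∂μ, Tendsto (fun n => Y n ω) atTop (𝓝 (Y' ω))) (t : E) :
    Tendsto (fun n => charFun (μ.map (Y n)) t) atTop (𝓝 (charFun (μ.map Y') t)) := by
  have he : Continuous fun v : E => Complex.exp ((⟪t, v⟫ : ℝ) * Complex.I) := by fun_prop
  simp_rw [← integral_exp_inner_eq_charFun_map (hY _),
    ← integral_exp_inner_eq_charFun_map (aemeasurable_of_tendsto_metrizable_ae' hY hlim)]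
  refine tendsto_integral_of_dominated_convergence (fun _ => 1)
    (fun n => (he.measurable.comp_aemeasurable (hY n)).aestronglyMeasurable) (integrable_const 1)
    (fun n => ae_of_all _ fun ω => (Complex.norm_exp_ofReal_mul_I _).le) ?_
  filter_upwards [hlim] with ω hω
  exact (he.tendsto _).comp hω

end Integral

section Euclidean

variable {Ω : Type*} [MeasurableSpace Ω] {d : ℕ}

lemma inner_toEuc_mulVec (M : Matrix (Fin d) (Fin d) ℝ) (v t : EuclideanSpace ℝ (Fin d)) :
    ⟪toEuc (M *ᵥ ofEuc v), t⟫ = ⟪v, toEuc (Mᵀ *ᵥ ofEuc t)⟫ := by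
  simp only [toEuc, ofEuc, EuclideanSpace.inner_eq_star_dotProduct, WithLp.equiv_symm_apply,
    WithLp.equiv_apply, star_trivial]
  rw [dotProduct_mulVec, mulVec_transpose]

lemma continuous_toEuc_mulVec :
    Continuous fun p : (Fin d → Fin d → ℝ) × EuclideanSpace ℝ (Fin d) =>
      toEuc (of p.1 *ᵥ ofEuc p.2) :=
  (PiLp.continuous_toLp 2 _).comp <| Continuous.matrix_mulVec (A := fun p => of p.1)
    continuous_fst ((PiLp.continuous_ofLp 2 _).comp continuous_snd)

lemma continuous_toEuc_mulVec_const (M : Matrix (Fin d) (Fin d) ℝ) :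
    Continuous fun v : EuclideanSpace ℝ (Fin d) => toEuc (M *ᵥ ofEuc v) :=
  continuous_toEuc_mulVec.comp (continuous_const.prodMk continuous_id)

lemma measurable_toEuc_mulVec {A : Ω → Matrix (Fin d) (Fin d) ℝ}
    {V : Ω → EuclideanSpace ℝ (Fin d)} (hA : Measurable fun ω => of.symm (A ω))
    (hV : Measurable V) : Measurable fun ω => toEuc (A ω *ᵥ ofEuc (V ω)) :=
  continuous_toEuc_mulVec.measurable.comp (hA.prodMk hV)

lemma Measurable.charFun_toEuc_transpose_mulVec {ν : Measure (EuclideanSpace ℝ (Fin d))}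
    [IsFiniteMeasure ν] {A : Ω → Matrix (Fin d) (Fin d) ℝ}
    (hA : Measurable fun ω => of.symm (A ω)) (t : EuclideanSpace ℝ (Fin d)) :
    Measurable fun ω => charFun ν (toEuc ((A ω)ᵀ *ᵥ ofEuc t)) := by
  have h : Continuous fun m : Fin d → Fin d → ℝ => toEuc ((of m)ᵀ *ᵥ ofEuc t) :=
    continuous_toEuc_mulVec.comp (continuous_id.matrix_transpose.prodMk continuous_const)
  exact (continuous_charFun.comp h).measurable.comp hA

lemma charFun_map_toEuc_mulVec (ν : Measure (EuclideanSpace ℝ (Fin d)))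
    (M : Matrix (Fin d) (Fin d) ℝ) (t : EuclideanSpace ℝ (Fin d)) :
    charFun (ν.map fun v => toEuc (M *ᵥ ofEuc v)) t = charFun ν (toEuc (Mᵀ *ᵥ ofEuc t)) := by
  rw [charFun_apply, charFun_apply,
    integral_map (continuous_toEuc_mulVec_const M).aemeasurable (by fun_prop)]
  simp_rw [inner_toEuc_mulVec]

lemma norm_charFun_map_sum_mulVec_add {ι : Type*} {μ : Measure Ω}
    {X : ι → Ω → EuclideanSpace ℝ (Fin d)} (hXind : iIndepFun X μ) (hXm : ∀ j, Measurable (X j))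
    (M : ι → Matrix (Fin d) (Fin d) ℝ) (β t : EuclideanSpace ℝ (Fin d)) (s : Finset ι) :
    ‖charFun (μ.map fun ω => ∑ j ∈ s, toEuc (M j *ᵥ ofEuc (X j ω)) + β) t‖ =
      ∏ j ∈ s, ‖charFun (μ.map (X j)) (toEuc ((M j)ᵀ *ᵥ ofEuc t))‖ := by
  have hM := fun j => continuous_toEuc_mulVec_const (M j)
  have hMX : ∀ j, Measurable fun ω => toEuc (M j *ᵥ ofEuc (X j ω)) :=
    fun j => (hM j).measurable.comp (hXm j)
  have hMXind : iIndepFun (fun j ω => toEuc (M j *ᵥ ofEuc (X j ω))) μ :=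
    hXind.comp _ fun j => (hM j).measurable
  have hshift : μ.map (fun ω => ∑ j ∈ s, toEuc (M j *ᵥ ofEuc (X j ω)) + β) =
      (μ.map fun ω => ∑ j ∈ s, toEuc (M j *ᵥ ofEuc (X j ω))).map (· + β) :=
    (Measure.map_map (measurable_add_const β) (Finset.measurable_fun_sum _ fun j _ => hMX j)).symm
  rw [hshift, charFun_map_add_const, norm_mul, Complex.norm_exp_ofReal_mul_I, mul_one,
    (hMXind.restrict s).charFun_map_fun_finsetSum_eq_prod fun j _ => (hMX j).aemeasurable,
    Finset.prod_apply, norm_prod]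
  refine Finset.prod_congr rfl fun j _ => ?_
  rw [← charFun_map_toEuc_mulVec, Measure.map_map (hM j).measurable (hXm j)]
  rfl

lemma charFun_map_sum_mulVec_add_eq_integral {ι : Type*} {μ : Measure Ω} [IsFiniteMeasure μ]
    {X : ι → Ω → EuclideanSpace ℝ (Fin d)} {A : ι → Ω → Matrix (Fin d) (Fin d) ℝ}
    {b : Ω → EuclideanSpace ℝ (Fin d)} (hXm : ∀ j, Measurable (X j))
    (hAm : ∀ j, Measurable fun ω => of.symm (A j ω)) (hbm : Measurable b)
    (hAbX : IndepFun (fun ω => ((fun j => of.symm (A j ω)), b ω)) (fun ω j => X j ω) μ)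
    (s : Finset ι) (t : EuclideanSpace ℝ (Fin d)) :
    charFun (μ.map fun ω => ∑ j ∈ s, toEuc (A j ω *ᵥ ofEuc (X j ω)) + b ω) t =
      ∫ ω, charFun (μ.map fun ω' => ∑ j ∈ s, toEuc (A j ω *ᵥ ofEuc (X j ω')) + b ω) t ∂μ := by
  let F : ((ι → Fin d → Fin d → ℝ) × EuclideanSpace ℝ (Fin d)) ×
      (ι → EuclideanSpace ℝ (Fin d)) → ℂ := fun p =>
    Complex.exp ((⟪t, ∑ j ∈ s, toEuc (of (p.1.1 j) *ᵥ ofEuc (p.2 j)) + p.1.2⟫ : ℝ) * Complex.I)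
  have hexp : Continuous fun v : EuclideanSpace ℝ (Fin d) =>
      Complex.exp ((⟪t, v⟫ : ℝ) * Complex.I) := by fun_prop
  have hF : Measurable F := hexp.measurable.comp <|
    (Finset.measurable_fun_sum s fun j _ => measurable_toEuc_mulVec
      (by simp only [Equiv.symm_apply_apply]; fun_prop) (by fun_prop)).add (by fun_prop)
  have hW : Measurable fun ω => ((fun j => of.symm (A j ω)), b ω) :=
    (measurable_pi_lambda _ hAm).prodMk hbm
  have hZ : Measurable fun ω j => X j ω := measurable_pi_lambda _ hXm
  have hS : Measurable fun ω => ∑ j ∈ s, toEuc (A j ω *ᵥ ofEuc (X j ω)) + b ω :=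
    (Finset.measurable_fun_sum s fun j _ => measurable_toEuc_mulVec (hAm j) (hXm j)).add hbm
  have hcond : ∫ ω, Complex.exp
      ((⟪t, ∑ j ∈ s, toEuc (A j ω *ᵥ ofEuc (X j ω)) + b ω⟫ : ℝ) * Complex.I) ∂μ =
      ∫ ω, ∫ ω', F ((fun j => of.symm (A j ω), b ω), fun j => X j ω') ∂μ ∂μ :=
    hAbX.integral_comp_eq_integral_integral hW hZ hF.stronglyMeasurable
      (Integrable.of_bound (hF.comp (hW.prodMk hZ)).aestronglyMeasurable 1
        (ae_of_all _ fun ω => (Complex.norm_exp_ofReal_mul_I _).le))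
  rw [← integral_exp_inner_eq_charFun_map hS.aemeasurable, hcond]
  refine integral_congr_ae (ae_of_all _ fun ω => ?_)
  have hSω : Measurable fun ω' => ∑ j ∈ s, toEuc (A j ω *ᵥ ofEuc (X j ω')) + b ω :=
    (Finset.measurable_fun_sum s fun j _ =>
      (continuous_toEuc_mulVec_const (A j ω)).measurable.comp (hXm j)).add_const (b ω)
  simp only [F, Equiv.apply_symm_apply]
  exact integral_exp_inner_eq_charFun_map hSω.aemeasurable t

lemma norm_charFun_map_sum_mulVec_add_le {ι : Type*} {μ : Measure Ω} [IsFiniteMeasure μ]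
    {X : ι → Ω → EuclideanSpace ℝ (Fin d)} {A : ι → Ω → Matrix (Fin d) (Fin d) ℝ}
    {b : Ω → EuclideanSpace ℝ (Fin d)} (hXm : ∀ j, Measurable (X j))
    (hAm : ∀ j, Measurable fun ω => of.symm (A j ω)) (hbm : Measurable b)
    (hXind : iIndepFun X μ)
    (hAbX : IndepFun (fun ω => ((fun j => of.symm (A j ω)), b ω)) (fun ω j => X j ω) μ)
    (s : Finset ι) (t : EuclideanSpace ℝ (Fin d)) :
    ‖charFun (μ.map fun ω => ∑ j ∈ s, toEuc (A j ω *ᵥ ofEuc (X j ω)) + b ω) t‖ ≤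
      ∫ ω, ∏ j ∈ s, ‖charFun (μ.map (X j)) (toEuc ((A j ω)ᵀ *ᵥ ofEuc t))‖ ∂μ := by
  rw [charFun_map_sum_mulVec_add_eq_integral hXm hAm hbm hAbX]
  exact (norm_integral_le_integral_norm _).trans_eq (integral_congr_ae (ae_of_all _ fun ω =>
    norm_charFun_map_sum_mulVec_add hXind hXm (fun j => A j ω) (b ω) t s))

end Euclidean

/-- If `X =_d Σ_{j} A_j X^{(j)} + b` with `(X^{(j)})_j` independent of each other and of
`((A_j)_j, b)`, and the series converges a.s., then the characteristic function `φ` of `X`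
satisfies `|φ(t)| ≤ E[∏_j |φ_j(A_jᵀ t)|]`, where `φ_j` is the characteristic function of
`X^{(j)}`. -/
theorem charFun_recursion_bound
    {Ω : Type*} [MeasurableSpace Ω] (μ : Measure Ω) [IsProbabilityMeasure μ]
    {d : ℕ} (X : Ω → EuclideanSpace ℝ (Fin d))
    (Xc : ℕ → Ω → EuclideanSpace ℝ (Fin d))
    (A : ℕ → Ω → Matrix (Fin d) (Fin d) ℝ)
    (b : Ω → EuclideanSpace ℝ (Fin d))
    (hXm : Measurable X) (hXcm : ∀ j, Measurable (Xc j))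
    (hAm : ∀ j, Measurable fun ω => Matrix.of.symm (A j ω))
    (hbm : Measurable b)
    (hiid : iIndepFun Xc μ)
    (hindep : IndepFun (fun ω => ((fun j => Matrix.of.symm (A j ω)), b ω))
      (fun ω (j : ℕ) => Xc j ω) μ)
    (hsum : ∀ᵐ ω ∂μ, Summable fun j => toEuc (A j ω *ᵥ ofEuc (Xc j ω)))
    (hlaw : μ.map X =
      μ.map (fun ω => (∑' j, toEuc (A j ω *ᵥ ofEuc (Xc j ω))) + b ω)) :
    ∀ t : EuclideanSpace ℝ (Fin d),
      ‖∫ ω, Complex.exp ((⟪t, X ω⟫ : ℝ) * Complex.I) ∂μ‖ ≤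
        ∫ ω, ∏' j,
          ‖∫ ω', Complex.exp ((⟪toEuc ((A j ω)ᵀ *ᵥ ofEuc t), Xc j ω'⟫ : ℝ) * Complex.I) ∂μ‖
          ∂μ := by
  intro t
  have hpartial (n : ℕ) : Measurable fun ω =>
      ∑ j ∈ Finset.range n, toEuc (A j ω *ᵥ ofEuc (Xc j ω)) + b ω :=
    (Finset.measurable_fun_sum _ fun j _ => measurable_toEuc_mulVec (hAm j) (hXcm j)).add hbm
  have hlim : ∀ᵐ ω ∂μ, Tendsto
      (fun n => ∑ j ∈ Finset.range n, toEuc (A j ω *ᵥ ofEuc (Xc j ω)) + b ω) atTop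
      (𝓝 ((∑' j, toEuc (A j ω *ᵥ ofEuc (Xc j ω))) + b ω)) := by
    filter_upwards [hsum] with ω hω using hω.hasSum.tendsto_sum_nat.add tendsto_const_nhds
  have hφ_le_one (j : ℕ) (ω : Ω) :
      ‖charFun (μ.map (Xc j)) (toEuc ((A j ω)ᵀ *ᵥ ofEuc t))‖ ≤ 1 :=
    have := Measure.isProbabilityMeasure_map (μ := μ) (hXcm j).aemeasurable
    norm_charFun_le_one _
  rw [integral_exp_inner_eq_charFun_map hXm.aemeasurable, hlaw]
  simp_rw [integral_exp_inner_eq_charFun_map (hXcm _).aemeasurable]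
  exact le_of_tendsto_of_tendsto'
    (tendsto_charFun_map_of_ae_tendsto (fun n => (hpartial n).aemeasurable) hlim t).norm
    (tendsto_integral_prod_range_tprod_of_nonneg_of_le_one
      (fun j => ((hAm j).charFun_toEuc_transpose_mulVec t).norm.aestronglyMeasurable)
      (fun _ _ => norm_nonneg _) hφ_le_one)
    fun n => norm_charFun_map_sum_mulVec_add_le hXcm hAm hbm hiid hindep _ t
end

section
/- Suppose (W, X) is a pair of real-valued random variables with E[W] = E[X] = 0, satisfying the bivariate split-tree fixed-point equation (W, X)^T =_d Σ_{j=1}^b M_j (W^{(j)}, X^{(j)})^T + η(V), where M_j = [[V_j², V_j(1−V_j)],[0, V_j]], η(V) = C(V)·(1,1)^T + (c(1 − Σ_j V_j²) − 1, 0)^T, and suppose Σ_j V_j² is almost surely equal to a constant. Then, writing X for the solution of the one-dimensional equation X =_d Σ_j V_j X^{(j)} + C(V), the pair (X, X) is a solution of the bivariate equation. In particular, c·E[1 − Σ_j V_j²] = 1. -/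
open MeasureTheory ProbabilityTheory

/-!
Take expectations in the first coordinate of the bivariate equation: `V` is independent of the
centred copies, so the random-weighted sum of copies has mean zero, and with `E[C(V)] = 0` this
leaves `0 = E[W] = c·E[1 − Σ V_j²] − 1`. As `Σ V_j² = k` almost surely, this says
`c(1 − k) = 1`. On the diagonal, `V_j² + V_j(1 − V_j) = V_j` and `c(1 − Σ V_j²) − 1 = 0`
almost surely, so both coordinates of the bivariate right-hand side equal the one-dimensional
one, whose law is that of `X̃`.
-/

section

variable {Ω ι α β : Type*} [MeasurableSpace Ω] [MeasurableSpace α] [MeasurableSpace β]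
  {μ : Measure Ω}

lemma integral_comp_mul_comp_eq_zero_of_indepFun_pi {V : Ω → α} {P : ι → Ω → β}
    (hind : IndepFun V (fun ω j => P j ω) μ) (hV : Measurable V) (hP : ∀ j, Measurable (P j))
    {u : α → ℝ} {φ : β → ℝ} (hu : Measurable u) (hφ : Measurable φ) {j : ι}
    (hφ0 : ∫ ω, φ (P j ω) ∂μ = 0) :
    ∫ ω, u (V ω) * φ (P j ω) ∂μ = 0 := by
  have h := hind.integral_fun_comp_mul_comp (f := u) (g := fun p => φ (p j)) hV.aemeasurable
    (measurable_pi_lambda _ hP).aemeasurable hu.aestronglyMeasurable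
    (by fun_prop : Measurable fun p : ι → β => φ (p j)).aestronglyMeasurable
  rw [h, hφ0, mul_zero]

lemma integral_sum_sq_mul_fst_add_mul_snd_eq_zero [Fintype ι] {V : Ω → ι → ℝ}
    {P : ι → Ω → ℝ × ℝ} (hind : IndepFun V (fun ω j => P j ω) μ) (hV : Measurable V)
    (hP : ∀ j, Measurable (P j))
    (hfst : ∀ j, ∫ ω, (P j ω).1 ∂μ = 0) (hsnd : ∀ j, ∫ ω, (P j ω).2 ∂μ = 0)
    (hint_fst : ∀ j, Integrable (fun ω => V ω j ^ 2 * (P j ω).1) μ)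
    (hint_snd : ∀ j, Integrable (fun ω => V ω j * (1 - V ω j) * (P j ω).2) μ) :
    ∫ ω, ∑ j, (V ω j ^ 2 * (P j ω).1 + V ω j * (1 - V ω j) * (P j ω).2) ∂μ = 0 := by
  have hint (j : ι) : Integrable
      (fun ω => V ω j ^ 2 * (P j ω).1 + V ω j * (1 - V ω j) * (P j ω).2) μ :=
    (hint_fst j).add (hint_snd j)
  rw [integral_finsetSum _ fun j _ => hint j]
  refine Finset.sum_eq_zero fun j _ => ?_
  rw [integral_add (hint_fst j) (hint_snd j),
    integral_comp_mul_comp_eq_zero_of_indepFun_pi hind hV hP (u := fun v => v j ^ 2)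
      (by fun_prop) measurable_fst (hfst j),
    integral_comp_mul_comp_eq_zero_of_indepFun_pi hind hV hP (u := fun v => v j * (1 - v j))
      (by fun_prop) measurable_snd (hsnd j), add_zero]

lemma integral_add_add_mul_one_sub_sub_one_of_ae_eq [IsProbabilityMeasure μ]
    {A C S : Ω → ℝ} (hA : Integrable A μ) (hC : Integrable C μ) {k : ℝ}
    (hS : ∀ᵐ ω ∂μ, S ω = k) (c : ℝ) :
    ∫ ω, A ω + C ω + c * (1 - S ω) - 1 ∂μ =
      ∫ ω, A ω ∂μ + ∫ ω, C ω ∂μ + (c * (1 - k) - 1) := by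
  have hF : (fun ω => A ω + C ω + c * (1 - S ω) - 1)
      =ᵐ[μ] fun ω => A ω + C ω + (c * (1 - k) - 1) :=
    hS.mono fun ω hω => by dsimp only; rw [hω]; ring
  rw [integral_congr_ae hF, integral_add (f := fun ω => A ω + C ω) (hA.add hC)
    (integrable_const _), integral_add hA hC, integral_const]
  simp

lemma sum_sq_mul_add_mul_one_sub_mul [Fintype ι] (v x : ι → ℝ) :
    ∑ j, (v j ^ 2 * x j + v j * (1 - v j) * x j) = ∑ j, v j * x j :=
  Finset.sum_congr rfl fun j _ => by ring

end

theorem split_tree_diagonal_solution_general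
    {Ω : Type*} [MeasurableSpace Ω] (μ : Measure Ω) [IsProbabilityMeasure μ]
    {b : ℕ} (V : Ω → Fin b → ℝ) (hVmeas : Measurable V)
    (Cfun : (Fin b → ℝ) → ℝ)
    (c : ℝ)
    (W X : Ω → ℝ) (hWmeas : Measurable W) (hXmeas : Measurable X)
    (hWmean : ∫ ω, W ω ∂μ = 0) (hXmean : ∫ ω, X ω ∂μ = 0)
    (Pc : Fin b → Ω → ℝ × ℝ) (hPcmeas : ∀ j, Measurable (Pc j))
    (hPc : ∀ j, μ.map (Pc j) = μ.map fun ω => (W ω, X ω))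
    (hindepV : IndepFun V (fun ω (j : Fin b) => Pc j ω) μ)
    (heq : (μ.map fun ω => (W ω, X ω)) = μ.map (fun ω =>
      (∑ j, (V ω j ^ 2 * (Pc j ω).1 + V ω j * (1 - V ω j) * (Pc j ω).2)
          + Cfun (V ω) + c * (1 - ∑ j, V ω j ^ 2) - 1,
        ∑ j, V ω j * (Pc j ω).2 + Cfun (V ω))))
    (hCint : Integrable (fun ω => Cfun (V ω)) μ)
    (hCmean : ∫ ω, Cfun (V ω) ∂μ = 0)
    (hprod1 : ∀ j, Integrable (fun ω => V ω j ^ 2 * (Pc j ω).1) μ)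
    (hprod2 : ∀ j, Integrable (fun ω => V ω j * (1 - V ω j) * (Pc j ω).2) μ)
    (k : ℝ) (hconst : ∀ᵐ ω ∂μ, ∑ j, V ω j ^ 2 = k)
    (Xt : Ω → ℝ) (hXtmeas : Measurable Xt)
    (Xc : Fin b → Ω → ℝ) (hXcmeas : ∀ j, Measurable (Xc j))
    (heq1 : μ.map Xt = μ.map fun ω => ∑ j, V ω j * Xc j ω + Cfun (V ω)) :
    c * ∫ ω, (1 - ∑ j, V ω j ^ 2) ∂μ = 1 ∧
    (μ.map fun ω => (Xt ω, Xt ω)) = μ.map (fun ω =>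
      (∑ j, (V ω j ^ 2 * Xc j ω + V ω j * (1 - V ω j) * Xc j ω)
          + Cfun (V ω) + c * (1 - ∑ j, V ω j ^ 2) - 1,
        ∑ j, V ω j * Xc j ω + Cfun (V ω))) := by
  -- Naming `C(V)` lets `fun_prop` use its integrability instead of decomposing `Cfun ∘ V`.
  obtain ⟨C, hCV⟩ : ∃ C : Ω → ℝ, ∀ ω, Cfun (V ω) = C ω := ⟨_, fun _ => rfl⟩
  simp only [hCV] at hCint hCmean heq heq1 ⊢
  have hcopy (j : Fin b) {φ : ℝ × ℝ → ℝ} (hφ : Measurable φ) :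
      ∫ ω, φ (Pc j ω) ∂μ = ∫ ω, φ (W ω, X ω) ∂μ :=
    ((IdentDistrib.mk (hPcmeas j).aemeasurable (by fun_prop) (hPc j)).comp hφ).integral_eq
  have hsum := integral_sum_sq_mul_fst_add_mul_snd_eq_zero hindepV hVmeas hPcmeas
    (fun j => (hcopy j measurable_fst).trans hWmean)
    (fun j => (hcopy j measurable_snd).trans hXmean) hprod1 hprod2
  have hA : Integrable
      (fun ω => ∑ j, (V ω j ^ 2 * (Pc j ω).1 + V ω j * (1 - V ω j) * (Pc j ω).2)) μ :=
    integrable_finsetSum _ fun j _ => (hprod1 j).add (hprod2 j)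
  have hck : c * (1 - k) = 1 := by
    have hW :=
      ((IdentDistrib.mk (by fun_prop) (by fun_prop) heq).comp measurable_fst).integral_eq
    simp only [Function.comp_def] at hW
    rw [integral_add_add_mul_one_sub_sub_one_of_ae_eq hA hCint hconst, hsum, hCmean,
      hWmean] at hW
    linarith
  have hS : ∫ ω, (1 - ∑ j, V ω j ^ 2) ∂μ = 1 - k := by
    rw [integral_congr_ae (hconst.mono fun ω hω => by rw [hω]), integral_const]
    simp
  refine ⟨hS ▸ hck, ?_⟩
  refine (((IdentDistrib.mk hXtmeas.aemeasurable (by fun_prop) heq1).comp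
    (by fun_prop : Measurable fun x : ℝ => (x, x))).map_eq).trans
    (Measure.map_congr (hconst.mono fun ω hω => ?_))
  simp only [Function.comp_apply, sum_sq_mul_add_mul_one_sub_mul (V ω) (fun j => Xc j ω), hω,
    hck, add_sub_cancel_right]

/-- Bivariate split-tree fixed-point equation: if `(W, X)` is centred and solves
`(W,X)ᵀ =_d Σ_j M_j (W^{(j)}, X^{(j)})ᵀ + η(V)` with
`M_j = [[V_j², V_j(1−V_j)],[0, V_j]]` and
`η(V) = C(V)(1,1)ᵀ + (c(1 − Σ_j V_j²) − 1, 0)ᵀ`, and `Σ_j V_j²` is a.s. constant, then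
`c·E[1 − Σ_j V_j²] = 1`, and for any solution `X̃` of the one-dimensional equation
`X =_d Σ_j V_j X^{(j)} + C(V)` (with copies `Xc j`), the pair `(X̃, X̃)` solves the
bivariate equation. -/
theorem split_tree_diagonal_solution
    {Ω : Type*} [MeasurableSpace Ω] (μ : Measure Ω) [IsProbabilityMeasure μ]
    {b : ℕ} (V : Ω → Fin b → ℝ) (hVmeas : Measurable V)
    (hVprob : ∀ᵐ ω ∂μ, (∀ j, 0 ≤ V ω j) ∧ ∑ j, V ω j = 1)
    (mubar : ℝ) (hmubar : mubar ≠ 0)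
    (hmu : mubar = -∫ ω, ∑ j, V ω j * Real.log (V ω j) ∂μ)
    (Cfun : (Fin b → ℝ) → ℝ)
    (hCfun : ∀ w, Cfun w = 1 + (1 / mubar) * ∑ j, w j * Real.log (w j))
    (c : ℝ)
    (W X : Ω → ℝ) (hWmeas : Measurable W) (hXmeas : Measurable X)
    (hWint : Integrable W μ) (hXint : Integrable X μ)
    (hWmean : ∫ ω, W ω ∂μ = 0) (hXmean : ∫ ω, X ω ∂μ = 0)
    (Pc : Fin b → Ω → ℝ × ℝ) (hPcmeas : ∀ j, Measurable (Pc j))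
    (hPc : ∀ j, μ.map (Pc j) = μ.map fun ω => (W ω, X ω))
    (hiid : iIndepFun Pc μ)
    (hindepV : IndepFun V (fun ω (j : Fin b) => Pc j ω) μ)
    (heq : (μ.map fun ω => (W ω, X ω)) = μ.map (fun ω =>
      (∑ j, (V ω j ^ 2 * (Pc j ω).1 + V ω j * (1 - V ω j) * (Pc j ω).2)
          + Cfun (V ω) + c * (1 - ∑ j, V ω j ^ 2) - 1,
        ∑ j, V ω j * (Pc j ω).2 + Cfun (V ω))))
    (hCint : Integrable (fun ω => Cfun (V ω)) μ)
    (hCmean : ∫ ω, Cfun (V ω) ∂μ = 0)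
    (hSint : Integrable (fun ω => ∑ j, V ω j ^ 2) μ)
    (hprod1 : ∀ j, Integrable (fun ω => V ω j ^ 2 * (Pc j ω).1) μ)
    (hprod2 : ∀ j, Integrable (fun ω => V ω j * (1 - V ω j) * (Pc j ω).2) μ)
    (hprod3 : ∀ j, Integrable (fun ω => V ω j * (Pc j ω).2) μ)
    (k : ℝ) (hconst : ∀ᵐ ω ∂μ, ∑ j, V ω j ^ 2 = k)
    (Xt : Ω → ℝ) (hXtmeas : Measurable Xt)
    (Xc : Fin b → Ω → ℝ) (hXcmeas : ∀ j, Measurable (Xc j))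
    (hXc : ∀ j, μ.map (Xc j) = μ.map Xt)
    (heq1 : μ.map Xt = μ.map fun ω => ∑ j, V ω j * Xc j ω + Cfun (V ω)) :
    c * ∫ ω, (1 - ∑ j, V ω j ^ 2) ∂μ = 1 ∧
    (μ.map fun ω => (Xt ω, Xt ω)) = μ.map (fun ω =>
      (∑ j, (V ω j ^ 2 * Xc j ω + V ω j * (1 - V ω j) * Xc j ω)
          + Cfun (V ω) + c * (1 - ∑ j, V ω j ^ 2) - 1,
        ∑ j, V ω j * Xc j ω + Cfun (V ω))) :=
  split_tree_diagonal_solution_general μ V hVmeas Cfun c W X hWmeas hXmeas hWmean hXmean Pc hPcmeas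
    hPc hindepV heq hCint hCmean hprod1 hprod2 k hconst Xt hXtmeas Xc hXcmeas heq1
end
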